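/- arXiv:1906.08688 — 2 statements merged into one kernel-verified Lean document; each statement's English description precedes it below -/
import Mathlib

section
/- Any run ρ of length m over a finite state set Q contains a set of pairwise non-overlapping maximal loops ρ'₁,…,ρ'_k with k ≤ |Q|, such that at most |Q| positions of ρ are not covered by these loops. (Counting argument: greedily, between consecutive uncovered positions all intermediate states are distinct, or a loop could be extracted.) -/
open scoped Classical

/-- Latest index `j ≤ m` with `q j = q i` (or `0` if none; but when `i ≤ m` it is `≥ i`). -/
noncomputable def nxt {Q : Type} (q : ℕ → Q) (m i : ℕ) : ℕ :=
  Nat.findGreatest (fun j => q j = q i) m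

lemma le_nxt {Q : Type} (q : ℕ → Q) {m i : ℕ} (h : i ≤ m) : i ≤ nxt q m i :=
  Nat.le_findGreatest h rfl

lemma nxt_le {Q : Type} (q : ℕ → Q) (m i : ℕ) : nxt q m i ≤ m :=
  Nat.findGreatest_le m

lemma q_nxt {Q : Type} (q : ℕ → Q) {m i : ℕ} (h : i ≤ m) : q (nxt q m i) = q i :=
  Nat.findGreatest_spec (P := fun j => q j = q i) h rfl

lemma nxt_max {Q : Type} (q : ℕ → Q) {m i j : ℕ} (h1 : nxt q m i < j) (h2 : j ≤ m) :
    q j ≠ q i :=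
  Nat.findGreatest_is_greatest (P := fun j => q j = q i) h1 h2

noncomputable def build {Q : Type} (q : ℕ → Q) (m : ℕ) (i : ℕ) : List (ℕ × ℕ) :=
  if h : i ≤ m then
    if nxt q m i = i then build q m (i + 1)
    else (i, nxt q m i) :: build q m (nxt q m i + 1)
  else []
  termination_by m + 1 - i
  decreasing_by
  · omega
  · have := le_nxt q h; omega


lemma build_mem {Q : Type} (q : ℕ → Q) (m : ℕ) (i : ℕ) :
    ∀ p ∈ build q m i, i ≤ p.1 ∧ p.1 < p.2 ∧ p.2 ≤ m ∧ q p.1 = q p.2 := by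
  induction i using build.induct q m with
  | case1 i hi heq ih =>
      intro p hp
      rw [build, dif_pos hi, if_pos heq] at hp
      have h := ih p hp
      exact ⟨le_trans (by omega) h.1, h.2⟩
  | case2 i hi hne ih =>
      intro p hp
      rw [build, dif_pos hi, if_neg hne] at hp
      have hle := le_nxt q hi
      rcases List.mem_cons.mp hp with h | h
      · subst h
        exact ⟨le_refl _, lt_of_le_of_ne hle (Ne.symm hne), nxt_le q m i, (q_nxt q hi).symm⟩
      · have h2 := ih p h
        exact ⟨by omega, h2.2⟩
  | case3 i hi =>
      intro p hp
      rw [build, dif_neg hi] at hp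
      simp at hp

lemma build_pairwise {Q : Type} (q : ℕ → Q) (m : ℕ) (i : ℕ) :
    (build q m i).Pairwise (fun p p' => p.2 < p'.1) := by
  induction i using build.induct q m with
  | case1 i hi heq ih => rw [build, dif_pos hi, if_pos heq]; exact ih
  | case2 i hi hne ih =>
      rw [build, dif_pos hi, if_neg hne]
      refine List.pairwise_cons.mpr ⟨?_, ih⟩
      intro p hp
      have h := (build_mem q m _ p hp).1
      dsimp only
      omega
  | case3 i hi => rw [build, dif_neg hi]; exact List.Pairwise.nil

lemma build_nodup {Q : Type} (q : ℕ → Q) (m : ℕ) (i : ℕ) :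
    ((build q m i).map (fun p => q p.1)).Nodup := by
  induction i using build.induct q m with
  | case1 i hi heq ih => rw [build, dif_pos hi, if_pos heq]; exact ih
  | case2 i hi hne ih =>
      rw [build, dif_pos hi, if_neg hne, List.map_cons]
      refine List.nodup_cons.mpr ⟨?_, ih⟩
      intro hmem
      rcases List.mem_map.mp hmem with ⟨p, hp, heq⟩
      have h := build_mem q m _ p hp
      exact nxt_max q (m := m) (i := i) (j := p.1) (by omega) (by omega) heq
  | case3 i hi => rw [build, dif_neg hi]; simp

lemma build_uncovered {Q : Type} (q : ℕ → Q) (m : ℕ) (i : ℕ) :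
    ∀ t, i ≤ t → t ≤ m → (∀ p ∈ build q m i, ¬(p.1 ≤ t ∧ t ≤ p.2)) →
      ∀ j, t < j → j ≤ m → q j ≠ q t := by
  induction i using build.induct q m with
  | case1 i hi heq ih =>
      intro t hit htm hun j htj hjm
      rcases eq_or_lt_of_le hit with h | h
      · subst h
        exact nxt_max q (show nxt q m i < j by rw [heq]; exact htj) hjm
      · rw [build, dif_pos hi, if_pos heq] at hun
        exact ih t h htm hun j htj hjm
  | case2 i hi hne ih =>
      intro t hit htm hun j htj hjm
      rw [build, dif_pos hi, if_neg hne] at hun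
      have h0 := hun (i, nxt q m i) List.mem_cons_self
      have hle := le_nxt q hi
      have ht : nxt q m i < t := by
        by_contra hc
        exact h0 ⟨hit, le_of_not_gt hc⟩
      exact ih t ht htm (fun p hp => hun p (List.mem_cons_of_mem _ hp)) j htj hjm
  | case3 i hi =>
      intro t hit htm
      omega

/-- Any run `q 0, …, q m` over a finite state set `Q` admits a set of at most `|Q|`
pairwise non-overlapping loops (intervals `[i,j]` with `i < j` and `q i = q j`)
leaving at most `|Q|` positions uncovered. -/
theorem loops_cover (Q : Type) [Fintype Q] (m : ℕ) (q : ℕ → Q) :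
    ∃ L : List (ℕ × ℕ),
      L.length ≤ Fintype.card Q ∧
      (∀ p ∈ L, p.1 < p.2 ∧ p.2 ≤ m ∧ q p.1 = q p.2) ∧
      -- pairwise non-overlapping (listed in increasing order)
      L.Pairwise (fun p p' => p.2 < p'.1) ∧
      -- at most |Q| positions of 0,…,m are not covered by any loop interval
      ((Finset.range (m + 1)).filter
        (fun t => ∀ p ∈ L, ¬(p.1 ≤ t ∧ t ≤ p.2))).card ≤ Fintype.card Q := by
  classical
  refine ⟨build q m 0, ?_, ?_, build_pairwise q m 0, ?_⟩
  · have h := (build_nodup q m 0).length_le_card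
    rwa [List.length_map] at h
  · intro p hp
    exact (build_mem q m 0 p hp).2
  · set S := (Finset.range (m + 1)).filter
      (fun t => ∀ p ∈ build q m 0, ¬(p.1 ≤ t ∧ t ≤ p.2)) with hS
    have key : ∀ t ∈ S, ∀ j, t < j → j ≤ m → q j ≠ q t := by
      intro t ht
      simp only [hS, Finset.mem_filter, Finset.mem_range] at ht
      exact build_uncovered q m 0 t (Nat.zero_le _) (by omega) ht.2
    have hinj : Set.InjOn q S := by
      intro a ha b hb hab
      by_contra hne
      have ha' := ha; have hb' := hb
      simp only [Finset.mem_coe, hS, Finset.mem_filter, Finset.mem_range] at ha' hb'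
      rcases Nat.lt_or_ge a b with h | h
      · exact key a ha b h (by omega) hab.symm
      · exact key b hb a (by omega) (by omega) hab
    have h := Finset.card_le_card_of_injOn (t := (Finset.univ : Finset Q)) q (fun x _ => Finset.mem_univ _) hinj
    simpa using h
end

section
/- Let T₁, T₂ be functional one-way transducers (each realizing a partial function from Σ* to Γ*) with T₁ ⊆ T₂ (classical containment of the realized relations). Define R as the product transducer over Σ ⊎ Γ whose states are pairs (q₁,q₂), initial state the pair of initial states, final states F₁ × F₂, with transitions (s₁,s₂) →(a·w₂ | a·w₁) (t₁,t₂) whenever s₁ →(a|w₁) t₁ in T₁ and s₂ →(a|w₂) t₂ in T₂. Then R is a resynchronizer: every pair of synchronized words (w, w') related by R satisfies π_Σ(w) = π_Σ(w') and π_Γ(w) = π_Γ(w'). -/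
/-- A one-way transducer with input alphabet `Sig`, output alphabet `Gam`, states `Q`. -/
structure OWT (Sig Gam Q : Type) where
  init : Q
  final : Set Q
  trans : Q → Sig → List Gam → Q → Prop

/-- Runs of a one-way transducer, recording consumed input and produced output. -/
inductive OWT.Run {Sig Gam Q : Type} (T : OWT Sig Gam Q) :
    Q → List Sig → List Gam → Q → Prop
  | nil (q : Q) : T.Run q [] [] q
  | cons {p q r : Q} {a : Sig} {w : List Gam} {u : List Sig} {v : List Gam} :
      T.trans p a w q → T.Run q u v r → T.Run p (a :: u) (w ++ v) r

/-- The relation realized by a one-way transducer. -/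
def OWT.Realizes {Sig Gam Q : Type} (T : OWT Sig Gam Q) (u : List Sig) (v : List Gam) : Prop :=
  ∃ qf ∈ T.final, T.Run T.init u v qf

/-- Runs of the product resynchronizer of `T₁` and `T₂`: on a transition of `T₁`
`s₁ →(a|w₁) t₁` and of `T₂` `s₂ →(a|w₂) t₂`, it consumes the synchronized block `a·w₂`
and produces the synchronized block `a·w₁` (words over `Sig ⊕ Gam`). -/
inductive ProdRun {Sig Gam Q₁ Q₂ : Type} (T₁ : OWT Sig Gam Q₁) (T₂ : OWT Sig Gam Q₂) :
    (Q₁ × Q₂) → List (Sig ⊕ Gam) → List (Sig ⊕ Gam) → (Q₁ × Q₂) → Prop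
  | nil (q : Q₁ × Q₂) : ProdRun T₁ T₂ q [] [] q
  | cons {s₁ t₁ : Q₁} {s₂ t₂ : Q₂} {r : Q₁ × Q₂} {a : Sig} {w₁ w₂ : List Gam}
      {w w' : List (Sig ⊕ Gam)} :
      T₁.trans s₁ a w₁ t₁ → T₂.trans s₂ a w₂ t₂ →
      ProdRun T₁ T₂ (t₁, t₂) w w' r →
      ProdRun T₁ T₂ (s₁, s₂) (Sum.inl a :: w₂.map Sum.inr ++ w)
        (Sum.inl a :: w₁.map Sum.inr ++ w') r

def piSigma {Sig Gam : Type} (w : List (Sig ⊕ Gam)) : List Sig := w.filterMap Sum.getLeft?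
def piGamma {Sig Gam : Type} (w : List (Sig ⊕ Gam)) : List Gam := w.filterMap Sum.getRight?

/-! A product run is a pair of runs of `T₁` and `T₂` on one input word, with `T₂`'s output
read off the consumed word and `T₁`'s off the produced one. Containment makes `T₁`'s output a
`T₂`-output for the same input, and functionality of `T₂` then forces the two outputs to agree. -/

section Projections

variable {Sig Gam : Type}

@[simp]
lemma piSigma_append (w w' : List (Sig ⊕ Gam)) :
    piSigma (w ++ w') = piSigma w ++ piSigma w' :=
  List.filterMap_append

@[simp]
lemma piGamma_append (w w' : List (Sig ⊕ Gam)) :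
    piGamma (w ++ w') = piGamma w ++ piGamma w' :=
  List.filterMap_append

@[simp]
lemma piSigma_cons_inl (a : Sig) (w : List (Sig ⊕ Gam)) :
    piSigma (Sum.inl a :: w) = a :: piSigma w := rfl

@[simp]
lemma piGamma_cons_inl (a : Sig) (w : List (Sig ⊕ Gam)) :
    piGamma (Sum.inl a :: w) = piGamma w := rfl

@[simp]
lemma piSigma_map_inr (v : List Gam) : piSigma (v.map (Sum.inr : Gam → Sig ⊕ Gam)) = [] := by
  simp [piSigma, List.filterMap_map, Function.comp_def]

@[simp]
lemma piGamma_map_inr (v : List Gam) : piGamma (v.map (Sum.inr : Gam → Sig ⊕ Gam)) = v := by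
  simp [piGamma, List.filterMap_map, Function.comp_def]

end Projections

lemma ProdRun.exists_runs {Sig Gam Q₁ Q₂ : Type} {T₁ : OWT Sig Gam Q₁} {T₂ : OWT Sig Gam Q₂}
    {p r : Q₁ × Q₂} {w w' : List (Sig ⊕ Gam)} (h : ProdRun T₁ T₂ p w w' r) :
    piSigma w = piSigma w' ∧ T₁.Run p.1 (piSigma w') (piGamma w') r.1 ∧
      T₂.Run p.2 (piSigma w) (piGamma w) r.2 := by
  induction h with
  | nil q => exact ⟨rfl, .nil _, .nil _⟩
  | cons h₁ h₂ _ ih =>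
    obtain ⟨hsig, run₁, run₂⟩ := ih
    simp only [List.cons_append, piSigma_cons_inl, piGamma_cons_inl, piSigma_append,
      piGamma_append, piSigma_map_inr, piGamma_map_inr, List.nil_append]
    exact ⟨by rw [hsig], .cons h₁ run₁, .cons h₂ run₂⟩

theorem prod_is_resynchronizer_general {Sig Gam Q₁ Q₂ : Type}
    (T₁ : OWT Sig Gam Q₁) (T₂ : OWT Sig Gam Q₂)
    (hfun₂ : ∀ u v v', T₂.Realizes u v → T₂.Realizes u v' → v = v')
    (hcont : ∀ u v, T₁.Realizes u v → T₂.Realizes u v)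
    (w w' : List (Sig ⊕ Gam)) (qf : Q₁ × Q₂)
    (hrun : ProdRun T₁ T₂ (T₁.init, T₂.init) w w' qf)
    (hfin : qf.1 ∈ T₁.final ∧ qf.2 ∈ T₂.final) :
    piSigma w = piSigma w' ∧ piGamma w = piGamma w' := by
  obtain ⟨hsig, run₁, run₂⟩ := hrun.exists_runs
  have realizes₁ : T₁.Realizes (piSigma w) (piGamma w') := ⟨qf.1, hfin.1, hsig ▸ run₁⟩
  have realizes₂ : T₂.Realizes (piSigma w) (piGamma w) := ⟨qf.2, hfin.2, run₂⟩
  exact ⟨hsig, hfun₂ _ _ _ realizes₂ (hcont _ _ realizes₁)⟩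

/-- The product of two functional one-way transducers with `T₁ ⊆ T₂` is a resynchronizer:
every pair of synchronized words related by a successful product run has equal `Sig`- and
`Gam`-projections. -/
theorem prod_is_resynchronizer {Sig Gam Q₁ Q₂ : Type}
    (T₁ : OWT Sig Gam Q₁) (T₂ : OWT Sig Gam Q₂)
    (hfun₁ : ∀ u v v', T₁.Realizes u v → T₁.Realizes u v' → v = v')
    (hfun₂ : ∀ u v v', T₂.Realizes u v → T₂.Realizes u v' → v = v')
    (hcont : ∀ u v, T₁.Realizes u v → T₂.Realizes u v)
    (w w' : List (Sig ⊕ Gam)) (qf : Q₁ × Q₂)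
    (hrun : ProdRun T₁ T₂ (T₁.init, T₂.init) w w' qf)
    (hfin : qf.1 ∈ T₁.final ∧ qf.2 ∈ T₂.final) :
    piSigma w = piSigma w' ∧ piGamma w = piGamma w' :=
  prod_is_resynchronizer_general T₁ T₂ hfun₂ hcont w w' qf hrun hfin
end
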